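/- Let E = {r_n}_{n∈ℕ} ⊆ ℕ be a set that is denser than lacunaries. Then for every ε > 0 and every d ∈ ℕ, there exist finite disjoint subsets A, B of E that are not (ε, d)-separable. -/

import Mathlib

/-- A strictly increasing sequence of positive integers is lacunary if
`inf_n s (n+1) / s n > 1`. -/
def Lacunary (s : ℕ → ℕ) : Prop :=
  StrictMono s ∧ (∀ n, 0 < s n) ∧ ∃ q : ℝ, 1 < q ∧ ∀ n, q * (s n : ℝ) ≤ (s (n + 1) : ℝ)

/-- A strictly increasing sequence `r` is denser than lacunaries if
`r n / s n → 0` for every lacunary sequence `s`. -/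
def DenserThanLacunaries (r : ℕ → ℕ) : Prop :=
  StrictMono r ∧ ∀ s : ℕ → ℕ, Lacunary s →
    Filter.Tendsto (fun n => (r n : ℝ) / (s n : ℝ)) Filter.atTop (nhds 0)

/-- Two finite sets `A, B ⊆ ℕ` are `(ε, d)`-separable if there is `α ∈ (ℝ/ℤ)^d`
with `dist (aα, bα) ≥ ε` for all `a ∈ A`, `b ∈ B`, where the torus `(ℝ/ℤ)^d`
carries the sup metric over coordinates. -/
def EpsDimSeparable (ε : ℝ) (d : ℕ) (A B : Finset ℕ) : Prop :=
  ∃ α : Fin d → AddCircle (1 : ℝ), ∀ a ∈ A, ∀ b ∈ B, ε ≤ dist (a • α) (b • α)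

/-!
Suppose every pair of disjoint finite subsets of `E = {r_n}` were `(ε, d)`-separable, and let
`m = ⌈4 / ε⌉`. Each of the `2 ^ (N + 1)` splittings of `{r_0, …, r_N}` into two parts is then
realised by some `α ∈ (ℝ/ℤ)^d`. Rounding `α` to the grid of mesh `1 / (m (r_N + 1))` keeps the two
parts `ε / 2`-apart, so the splitting can be read off from the rounded `α` together with the set of
`1 / m`-boxes met by the first part. Hence `2 ^ (N + 1) ≤ (m (r_N + 1)) ^ d · 2 ^ (m ^ d)`, which
forces `r_N` to grow like `2 ^ (N / d)`. But a set denser than lacunaries lies eventually below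
every lacunary sequence, in particular below one growing like `2 ^ (N / (2 d + 1))`.
-/

open Finset Filter

lemma dist_nsmul_le {E : Type*} [SeminormedAddCommGroup E] (n : ℕ) (x y : E) :
    dist (n • x) (n • y) ≤ n * dist x y := by
  rw [dist_eq_norm, dist_eq_norm, ← nsmul_sub]
  exact norm_nsmul_le

lemma sub_two_mul_le_dist_nsmul {E : Type*} [SeminormedAddCommGroup E] {α γ : E} {a b L : ℕ}
    {δ ε : ℝ} (hαγ : L * dist α γ ≤ δ) (ha : a ≤ L) (hb : b ≤ L)
    (hab : ε ≤ dist (a • α) (b • α)) : ε - 2 * δ ≤ dist (a • γ) (b • γ) := by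
  have close : ∀ n ≤ L, dist (n • α) (n • γ) ≤ δ := fun n hn =>
    (dist_nsmul_le n α γ).trans <|
      (mul_le_mul_of_nonneg_right (by exact_mod_cast hn) dist_nonneg).trans hαγ
  have := dist_triangle4 (a • α) (a • γ) (b • γ) (b • α)
  linarith [close a ha, dist_comm (b • γ) (b • α) ▸ close b hb]

lemma AddCircle.dist_coe_le_abs_sub {p : ℝ} (a b : ℝ) :
    dist (a : AddCircle p) (b : AddCircle p) ≤ |a - b| := by
  rw [dist_eq_norm, ← AddCircle.coe_sub, ← Real.norm_eq_abs]
  exact QuotientAddGroup.norm_mk_le_norm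

section Torus

variable {ι : Type*}

noncomputable def circleIndex (M : ℕ) [NeZero M] (x : AddCircle (1 : ℝ)) : Fin M :=
  ⟨⌊(AddCircle.equivIco 1 0 x : ℝ) * M⌋₊, by
    have hx : (AddCircle.equivIco 1 0 x : ℝ) ∈ Set.Ico (0 : ℝ) 1 := by
      simpa using (AddCircle.equivIco 1 0 x).2
    rw [Nat.floor_lt (by have := hx.1; positivity)]
    exact mul_lt_of_lt_one_left (by exact_mod_cast Nat.pos_of_neZero M) hx.2⟩

noncomputable def torusIndex (M : ℕ) [NeZero M] (x : ι → AddCircle (1 : ℝ)) : ι → Fin M :=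
  fun i => circleIndex M (x i)

noncomputable def torusGridPoint (M : ℕ) (k : ι → Fin M) : ι → AddCircle (1 : ℝ) :=
  fun i => ((k i / M : ℝ) : AddCircle (1 : ℝ))

variable {M : ℕ} [NeZero M]

lemma dist_circleIndex_lt (x : AddCircle (1 : ℝ)) :
    dist x ((circleIndex M x / M : ℝ) : AddCircle (1 : ℝ)) < 1 / M := by
  set t : ℝ := (AddCircle.equivIco 1 0 x : ℝ)
  have ht : 0 ≤ t := by simpa using (AddCircle.equivIco 1 0 x).2.1
  have hM : (0 : ℝ) < M := by exact_mod_cast Nat.pos_of_neZero M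
  have hfloor_le : (⌊t * M⌋₊ : ℝ) ≤ t * M := Nat.floor_le (by positivity)
  have hlt_floor : t * M < ⌊t * M⌋₊ + 1 := Nat.lt_floor_add_one _
  calc dist x ((circleIndex M x / M : ℝ) : AddCircle (1 : ℝ))
      = dist (t : AddCircle (1 : ℝ)) ((⌊t * M⌋₊ / M : ℝ) : AddCircle (1 : ℝ)) := by
        rw [AddCircle.coe_equivIco]; rfl
    _ ≤ |t - ⌊t * M⌋₊ / M| := AddCircle.dist_coe_le_abs_sub _ _
    _ = (t * M - ⌊t * M⌋₊) / M := by
        rw [abs_of_nonneg (by rw [sub_nonneg, div_le_iff₀ hM]; exact hfloor_le)]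
        field_simp
    _ < 1 / M := div_lt_div_of_pos_right (by linarith) hM

variable [Fintype ι]

lemma dist_torusGridPoint_torusIndex_lt (x : ι → AddCircle (1 : ℝ)) :
    dist x (torusGridPoint M (torusIndex M x)) < 1 / M :=
  (dist_pi_lt_iff (by have := Nat.pos_of_neZero M; positivity)).2
    fun i => dist_circleIndex_lt (x i)

lemma dist_lt_of_torusIndex_eq {x y : ι → AddCircle (1 : ℝ)}
    (h : torusIndex M x = torusIndex M y) : dist x y < 2 / M := by
  have hx := dist_torusGridPoint_torusIndex_lt (M := M) x
  have hy := dist_torusGridPoint_torusIndex_lt (M := M) y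
  rw [h] at hx
  have : (2 : ℝ) / M = 1 / M + 1 / M := by ring
  linarith [dist_triangle_right x y (torusGridPoint M (torusIndex M y))]

lemma mem_iff_torusIndex_mem_image {γ : ι → AddCircle (1 : ℝ)} {S F : Finset ℕ}
    (hγ : ∀ a ∈ S, ∀ b ∈ F \ S, 2 / M ≤ dist (a • γ) (b • γ)) {b : ℕ} (hb : b ∈ F) :
    b ∈ S ↔ torusIndex M (b • γ) ∈ S.image fun a => torusIndex M (a • γ) := by
  refine ⟨fun hbS => mem_image_of_mem _ hbS, fun hbS => ?_⟩
  by_contra hbS'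
  obtain ⟨a, haS, hab⟩ := mem_image.1 hbS
  exact (dist_lt_of_torusIndex_eq hab).not_ge (hγ a haS b (mem_sdiff.2 ⟨hb, hbS'⟩))

end Torus

theorem two_pow_card_le_of_forall_epsDimSeparable {ε : ℝ} {d m L : ℕ} (hm : 4 ≤ ε * m)
    {F : Finset ℕ} (hL : ∀ a ∈ F, a ≤ L) (hsep : ∀ S ⊆ F, EpsDimSeparable ε d S (F \ S)) :
    2 ^ #F ≤ (m * (L + 1)) ^ d * 2 ^ m ^ d := by
  have hm0 : 0 < m := Nat.pos_of_ne_zero (by rintro rfl; norm_num at hm)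
  have : NeZero m := ⟨hm0.ne'⟩
  set M := m * (L + 1)
  have : NeZero M := ⟨by positivity⟩
  have hmR : (0 : ℝ) < m := by exact_mod_cast hm0
  choose! α hα using hsep
  set γ : Finset ℕ → Fin d → AddCircle (1 : ℝ) := fun S => torusGridPoint M (torusIndex M (α S))
  -- Rounding to mesh `1 / M` moves each `a • α S` by less than `1 / m`, as `a ≤ L`.
  have hγ : ∀ S ⊆ F, ∀ a ∈ S, ∀ b ∈ F \ S, 2 / m ≤ dist (a • γ S) (b • γ S) := by
    intro S hS a ha b hb
    have hround : (L : ℝ) * dist (α S) (γ S) ≤ 1 / m := by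
      calc (L : ℝ) * dist (α S) (γ S) ≤ L * (1 / M) :=
            mul_le_mul_of_nonneg_left (dist_torusGridPoint_torusIndex_lt _).le (by positivity)
        _ ≤ 1 / m := by
            rw [Nat.cast_mul, Nat.cast_add_one, mul_one_div, div_le_div_iff₀ (by positivity) hmR]
            nlinarith
    have := sub_two_mul_le_dist_nsmul hround (hL a (hS ha)) (hL b (mem_sdiff.1 hb).1)
      (hα S hS a ha b hb)
    have : 4 / m ≤ ε := by rwa [div_le_iff₀ hmR]
    have : (2 : ℝ) / m = 4 / m - 2 * (1 / m) := by ring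
    linarith
  let code S := (torusIndex M (α S), S.image fun a => torusIndex m (a • γ S))
  have hcode : Set.InjOn code F.powerset := by
    intro S hS T hT hST
    rw [coe_powerset, Set.mem_preimage, Set.mem_powerset_iff, coe_subset] at hS hT
    obtain ⟨hαST, himage⟩ := Prod.ext_iff.1 hST
    have hγST : γ S = γ T := congrArg (torusGridPoint M) hαST
    ext b
    by_cases hb : b ∈ F
    · rw [mem_iff_torusIndex_mem_image (hγ S hS) hb, mem_iff_torusIndex_mem_image (hγ T hT) hb]
      simp only [code] at himage
      rw [himage, hγST]
    · exact iff_of_false (fun h => hb (hS h)) (fun h => hb (hT h))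
  simpa using card_le_card_of_injOn code (fun _ _ => mem_coe.2 (mem_univ _)) hcode

/-- The linear interpolation of `n ↦ R * 2 ^ (n / R)` between consecutive multiples of `R`:
it grows like `2 ^ (n / R)`, yet each step multiplies it by at least `1 + 1 / (2 R)`. -/
def slowLacunary (R n : ℕ) : ℕ := (R + n % R) * 2 ^ (n / R)

section SlowLacunary

variable {R : ℕ}

lemma slowLacunary_succ (hR : 0 < R) (n : ℕ) :
    slowLacunary R (n + 1) = slowLacunary R n + 2 ^ (n / R) := by
  have hn := Nat.div_add_mod n R
  have hmod := Nat.mod_lt n hR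
  obtain hlt | heq := (show n % R + 1 ≤ R from hmod).lt_or_eq
  · have hsucc : n + 1 = R * (n / R) + (n % R + 1) := by omega
    rw [slowLacunary, slowLacunary, hsucc, Nat.mul_add_mod, Nat.mod_eq_of_lt hlt,
      Nat.mul_add_div hR, Nat.div_eq_of_lt hlt]
    ring
  · have hsucc : n + 1 = R * (n / R + 1) := by rw [mul_add, mul_one]; omega
    rw [slowLacunary, slowLacunary, hsucc, Nat.mul_mod_right, Nat.mul_div_cancel_left _ hR,
      ← add_one_mul, add_assoc, heq]
    ring

lemma slowLacunary_pos (hR : 0 < R) (n : ℕ) : 0 < slowLacunary R n := by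
  unfold slowLacunary
  positivity

lemma slowLacunary_lt (hR : 0 < R) (n : ℕ) : slowLacunary R n < 2 * R * 2 ^ (n / R) := by
  unfold slowLacunary
  gcongr
  linarith [Nat.mod_lt n hR]

lemma lacunary_slowLacunary (hR : 0 < R) : Lacunary (slowLacunary R) := by
  refine ⟨strictMono_nat_of_lt_succ fun n => ?_, slowLacunary_pos hR,
    1 + 1 / (2 * R), by simp [hR], fun n => ?_⟩
  · rw [slowLacunary_succ hR]
    exact Nat.lt_add_of_pos_right (by positivity)
  · have hlt : (slowLacunary R n : ℝ) < 2 * R * 2 ^ (n / R) := by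
      exact_mod_cast slowLacunary_lt hR n
    rw [slowLacunary_succ hR, Nat.cast_add, Nat.cast_pow, Nat.cast_two, add_mul, one_mul,
      div_mul_eq_mul_div, one_mul, add_le_add_iff_left, div_le_iff₀ (by positivity)]
    linarith

end SlowLacunary

lemma DenserThanLacunaries.eventually_lt {r s : ℕ → ℕ} (hr : DenserThanLacunaries r)
    (hs : Lacunary s) : ∀ᶠ n in atTop, r n < s n := by
  filter_upwards [(hr.2 s hs).eventually (gt_mem_nhds one_pos)] with n hn
  rwa [div_lt_one (by exact_mod_cast hs.2.1 n), Nat.cast_lt] at hn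

lemma eventually_mul_two_pow_lt_two_pow (C : ℕ) {R d : ℕ} (hR : 2 * d ≤ R) :
    ∀ᶠ N in atTop, C * 2 ^ (N / R * d) < 2 ^ N := by
  filter_upwards [eventually_ge_atTop (2 * C)] with N hN
  have hexp : N / R * d ≤ N / 2 := by
    rw [Nat.le_div_iff_mul_le two_pos, mul_assoc]
    exact (Nat.mul_le_mul_left _ (by omega)).trans (Nat.div_mul_le_self N R)
  calc C * 2 ^ (N / R * d) < 2 ^ (N / 2) * 2 ^ (N / 2) :=
        Nat.mul_lt_mul_of_lt_of_le (Nat.lt_two_pow_self.trans_le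
          (Nat.pow_le_pow_right two_pos (by omega))) (Nat.pow_le_pow_right two_pos hexp)
          (by positivity)
    _ ≤ 2 ^ N := by rw [← pow_add]; exact Nat.pow_le_pow_right two_pos (by omega)

/-- If `E` is denser than lacunaries, then for every `ε > 0` and `d ∈ ℕ` there are
finite disjoint subsets `A, B` of `E` that are not `(ε, d)`-separable. -/
theorem denser_than_lacunaries_not_eps_separable (r : ℕ → ℕ)
    (hr : DenserThanLacunaries r) (ε : ℝ) (hε : 0 < ε) (d : ℕ) :
    ∃ A B : Finset ℕ, ↑A ⊆ Set.range r ∧ ↑B ⊆ Set.range r ∧ Disjoint A B ∧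
      ¬ EpsDimSeparable ε d A B := by
  by_contra! hsep
  set m := ⌈4 / ε⌉₊
  have hm : 4 ≤ ε * m := by rw [mul_comm, ← div_le_iff₀ hε]; exact Nat.le_ceil _
  have hcount (N : ℕ) : 2 ^ (N + 1) ≤ (m * (r N + 1)) ^ d * 2 ^ m ^ d := by
    have := two_pow_card_le_of_forall_epsDimSeparable hm (F := (range (N + 1)).image r)
      (by simpa [Nat.lt_succ_iff] using fun n hn => hr.1.monotone hn)
      fun S hS => hsep S _ ((coe_subset.2 hS).trans (by simp)) (by simp) disjoint_sdiff
    rwa [card_image_of_injective _ hr.1.injective, card_range] at this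
  set R := 2 * d + 1
  obtain ⟨N, hrN, hN⟩ := ((hr.eventually_lt (lacunary_slowLacunary (R := R) (by omega))).and
    (eventually_mul_two_pow_lt_two_pow ((2 * R * m) ^ d * 2 ^ m ^ d) (R := R) (d := d)
      (by omega))).exists
  have : 2 ^ (N + 1) < 2 ^ N := calc
    2 ^ (N + 1) ≤ (m * (r N + 1)) ^ d * 2 ^ m ^ d := hcount N
    _ ≤ (m * (2 * R * 2 ^ (N / R))) ^ d * 2 ^ m ^ d := by
        gcongr; exact (hrN.trans (slowLacunary_lt (by omega) N))
    _ = (2 * R * m) ^ d * 2 ^ m ^ d * 2 ^ (N / R * d) := by simp only [mul_pow, ← pow_mul]; ring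
    _ < 2 ^ N := hN
  exact (Nat.pow_lt_pow_right one_lt_two N.lt_succ_self).not_gt this
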